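/- For every S ∈ RatFunc ℂ, every n ∈ ℕ, and every j ∈ {1, 2, …, 2^n}, there exists a unique rational function S_{j,n} ∈ RatFunc ℂ whose Laurent coefficients satisfy a_k(S_{j,n}) = a_{2^n·k + j − 1}(S) for all k ∈ ℤ. (This is the decomposition S(x) = Σ_{j=1}^{2^n} x^{j−1} S_{j,n}(x^{2^n}).) -/

import Mathlib

noncomputable def coeffL (R : RatFunc ℂ) (n : ℤ) : ℂ :=
  ((R : LaurentSeries ℂ)).coeff n

/-!
Split a polynomial as `q = E(X²) + X·O(X²)`. Multiplying by the conjugate `E(X²) - X·O(X²)`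
turns it into the even polynomial `(E² - X·O²)(X²)`, which is nonzero for `q ≠ 0` because `X` is
not a square. Clearing denominators this way, every rational function is `U(X²) + X·V(X²)` with
`U`, `V` rational, and the Laurent coefficients of `U` and `V` are the even- and odd-indexed ones.
Iterating `n` times reaches every residue class modulo `2ⁿ`; uniqueness holds because a rational
function is determined by its Laurent expansion.
-/

namespace Polynomial

variable {R : Type*}

section CommSemiring

variable [CommSemiring R]

noncomputable def evenPart (f : R[X]) : R[X] := contract 2 f

noncomputable def oddPart (f : R[X]) : R[X] := contract 2 f.divX

theorem expand_evenPart_add_X_mul_expand_oddPart (f : R[X]) :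
    expand R 2 f.evenPart + X * expand R 2 f.oddPart = f := by
  ext n
  rw [coeff_add, ← pow_one X, coeff_X_pow_mul']
  simp only [evenPart, oddPart, coeff_expand two_pos, coeff_contract two_ne_zero, coeff_divX]
  rcases n.even_or_odd' with ⟨k, rfl | rfl⟩
  · rcases k with _ | k
    · simp
    · rw [if_pos (dvd_mul_right 2 _), if_pos (by omega), if_neg (by omega),
        Nat.mul_div_cancel_left _ two_pos, mul_comm, add_zero]
  · rw [if_neg (by omega), if_pos (by omega), if_pos (by omega), zero_add]
    congr 1
    omega

end CommSemiring

variable [CommRing R] [IsDomain R]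

theorem evenPart_sq_sub_X_mul_oddPart_sq_ne_zero {f : R[X]} (hf : f ≠ 0) :
    f.evenPart ^ 2 - X * f.oddPart ^ 2 ≠ 0 := by
  intro h
  rw [sub_eq_zero] at h
  by_cases hodd : f.oddPart = 0
  · have heven : f.evenPart = 0 := by simpa [hodd] using h
    apply hf
    rw [← expand_evenPart_add_X_mul_expand_oddPart f, heven, hodd]
    simp
  · -- the two sides have degrees of different parity
    have := congrArg natDegree h
    rw [natDegree_pow, natDegree_X_mul (pow_ne_zero 2 hodd), natDegree_pow] at this
    omega

theorem exists_mul_eq_expand_two {q : R[X]} (hq : q ≠ 0) :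
    ∃ c D : R[X], D ≠ 0 ∧ q * c = expand R 2 D := by
  refine ⟨expand R 2 q.evenPart - X * expand R 2 q.oddPart,
    q.evenPart ^ 2 - X * q.oddPart ^ 2, evenPart_sq_sub_X_mul_oddPart_sq_ne_zero hq, ?_⟩
  nth_rw 1 [← expand_evenPart_add_X_mul_expand_oddPart q]
  simp only [map_sub, map_mul, map_pow, expand_X]
  ring

end Polynomial

open Polynomial HahnSeries

namespace LaurentSeries

variable {R : Type*} [Semiring R] (n : ℕ) (hn : n ≠ 0)

noncomputable def expand : R⸨X⸩ →+* R⸨X⸩ :=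
  embDomainRingHom (AddMonoidHom.mulLeft (n : ℤ))
    (mul_right_injective₀ (Nat.cast_ne_zero.2 hn))
    (fun _ _ => mul_le_mul_iff_right₀ (by omega))

variable {n}

theorem coeff_expand_mul (f : R⸨X⸩) (k : ℤ) : (expand n hn f).coeff (n * k) = f.coeff k :=
  embDomain_coeff

theorem coeff_expand_of_not_dvd (f : R⸨X⸩) {m : ℤ} (hm : ¬ (n : ℤ) ∣ m) :
    (expand n hn f).coeff m = 0 :=
  embDomain_of_notMem_range fun ⟨k, hk⟩ => hm ⟨k, hk.symm⟩

theorem expand_single (k : ℤ) (r : R) : expand n hn (single k r) = single (n * k) r :=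
  embDomain_single

theorem expand_algebraMap {K : Type*} [Field K] (p : K[X]) :
    expand n hn (algebraMap K[X] K⸨X⸩ p) = algebraMap K[X] K⸨X⸩ (Polynomial.expand K n p) := by
  suffices (expand n hn).comp (algebraMap K[X] K⸨X⸩) =
      (algebraMap K[X] K⸨X⸩).comp (Polynomial.expand K n).toRingHom from
    DFunLike.congr_fun this p
  exact Polynomial.ringHom_ext (fun a => by simp [expand_single]) (by simp [expand_single])

end LaurentSeries

namespace RatFunc

open LaurentSeries

variable {K : Type*} [Field K]

theorem exists_coe_eq_expand_add_single_mul_expand (T : RatFunc K) :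
    ∃ U V : RatFunc K, (T : K⸨X⸩) =
      LaurentSeries.expand 2 two_ne_zero (U : K⸨X⸩) +
        single 1 1 * LaurentSeries.expand 2 two_ne_zero (V : K⸨X⸩) := by
  induction T using RatFunc.induction_on with
  | f p q hq =>
    obtain ⟨c, D, hD, hqc⟩ := exists_mul_eq_expand_two hq
    have hc : algebraMap K[X] K⸨X⸩ c ≠ 0 := by
      rw [map_ne_zero_iff _ (FaithfulSMul.algebraMap_injective K[X] K⸨X⸩)]
      rintro rfl
      exact hD (by simpa [expand_eq_zero two_pos] using hqc.symm)
    have hX : single 1 (1 : K) = algebraMap K[X] K⸨X⸩ Polynomial.X := by simp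
    refine ⟨algebraMap _ _ (p * c).evenPart / algebraMap _ _ D,
      algebraMap _ _ (p * c).oddPart / algebraMap _ _ D, ?_⟩
    rw [algebraMap_apply_div, algebraMap_apply_div, algebraMap_apply_div, map_div₀, map_div₀,
      expand_algebraMap, expand_algebraMap, expand_algebraMap, ← hqc, hX]
    rw [← mul_div_assoc, ← add_div, ← map_mul, ← map_add, expand_evenPart_add_X_mul_expand_oddPart]
    rw [map_mul, map_mul, mul_div_mul_right _ _ hc]

theorem coe_injective : Function.Injective ((↑) : RatFunc K → K⸨X⸩) :=
  (algebraMap (RatFunc K) K⸨X⸩).injective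

theorem exists_coeff_eq_coeff_two_mul_add (T : RatFunc K) {r : ℤ} (hr₀ : 0 ≤ r) (hr : r < 2) :
    ∃ U : RatFunc K, ∀ k : ℤ, (U : K⸨X⸩).coeff k = (T : K⸨X⸩).coeff (2 * k + r) := by
  obtain ⟨U, V, hT⟩ := exists_coe_eq_expand_add_single_mul_expand T
  have h_even (f : K⸨X⸩) (k : ℤ) : (LaurentSeries.expand 2 two_ne_zero f).coeff (2 * k) = f.coeff k := by
    exact_mod_cast coeff_expand_mul two_ne_zero f k
  have h_odd (f : K⸨X⸩) (k : ℤ) : (LaurentSeries.expand 2 two_ne_zero f).coeff (2 * k + 1) = 0 :=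
    coeff_expand_of_not_dvd two_ne_zero f (by omega)
  obtain rfl | rfl : r = 0 ∨ r = 1 := by omega
  · refine ⟨U, fun k => ?_⟩
    rw [hT, HahnSeries.coeff_add, coeff_single_mul, add_zero, h_even,
      show 2 * k - 1 = 2 * (k - 1) + 1 by ring, h_odd, mul_zero, add_zero]
  · refine ⟨V, fun k => ?_⟩
    rw [hT, HahnSeries.coeff_add, coeff_single_mul, add_sub_cancel_right, h_even, h_odd, one_mul,
      zero_add]

theorem exists_coeff_eq_coeff_two_pow_mul_add (n : ℕ) {r : ℤ} (hr₀ : 0 ≤ r) (hr : r < 2 ^ n)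
    (T : RatFunc K) :
    ∃ U : RatFunc K, ∀ k : ℤ, (U : K⸨X⸩).coeff k = (T : K⸨X⸩).coeff (2 ^ n * k + r) := by
  induction n generalizing r T with
  | zero => exact ⟨T, fun k => by rw [show r = 0 by omega]; simp⟩
  | succ n ih =>
    obtain ⟨T₁, hT₁⟩ := T.exists_coeff_eq_coeff_two_mul_add (r := r % 2) (by omega) (by omega)
    obtain ⟨U, hU⟩ := ih (r := r / 2) (by omega) (by omega) T₁
    refine ⟨U, fun k => ?_⟩
    rw [hU, hT₁]
    congr 1
    linear_combination Int.mul_ediv_add_emod r 2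

end RatFunc

theorem stmt_1 (S : RatFunc ℂ) (n : ℕ) (j : ℤ) (hj1 : 1 ≤ j) (hj2 : j ≤ 2 ^ n) :
    ∃! T : RatFunc ℂ, ∀ k : ℤ, coeffL T k = coeffL S (2 ^ n * k + j - 1) := by
  obtain ⟨T, hT⟩ := S.exists_coeff_eq_coeff_two_pow_mul_add n (r := j - 1) (by omega) (by omega)
  simp only [coeffL, add_sub_assoc]
  refine ⟨T, hT, fun T' hT' => RatFunc.coe_injective ?_⟩
  ext k
  exact (hT' k).trans (hT k).symm
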